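/- arXiv:2410.23610 — 2 statements merged into one kernel-verified Lean document; each statement's English description precedes it below -/
import Mathlib

section
/- Let g : ℝ^{D×(N+1)} × ℝ^p → ℝ^{D×(N+1)} be differentiable and satisfy (G1) and (G3). Let (ρ_t)_{t∈[0,1]} be a family of finite nonnegative Borel measures on ℝ^p, each supported in the closed ball {β : ‖β‖ ≤ r}, with ρ_t(ℝ^p) ≤ C_m for all t, and C_ρ-Lipschitz in the bounded-Lipschitz norm. Then for every H ∈ ℝ^{D×(N+1)} there exists a unique continuously differentiable T(H,·) : [0,1] → ℝ^{D×(N+1)} with T(H,0) = H and d/dt T(H,t) = ∫_{ℝ^p} g(T(H,t),β) dρ_t(β) for all t ∈ [0,1]; moreover, for every B > 0 the map (H,t) ↦ T(H,t) is Lipschitz continuous on {H : ‖H‖_{2,col} ≤ B} × [0,1]. -/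
/-!
The field `F t T = ∫ g(T, β) dρ_t(β)` inherits from (G1) a linear growth bound `‖F t T‖ ≤ M ‖T‖`
and from (G3) a Lipschitz bound on every ball, uniformly in `t ∈ [0,1]`, since every `ρ_t` lives
on the ball of radius `r` and has mass at most `Cm`. It is continuous in `t`: the bounded-Lipschitz
control of `ρ_t` passes to bounded uniformly continuous test functions, which are uniform limits
of bounded Lipschitz ones (inf-convolution). Grönwall's inequality keeps every solution in the
ball of radius `‖H‖ e^M`, so Picard–Lindelöf for the field cut off outside a slightly larger ball
gives a solution on all of `[0,1]`. Grönwall again gives uniqueness and Lipschitz dependence on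
`H`, and the bound on `F` along a solution gives Lipschitz dependence on `t`.
-/

open MeasureTheory Set

noncomputable section

/-- `D × (N+1)` real matrices, with the Frobenius (Euclidean) norm. -/
abbrev Mat (D N : ℕ) : Type := EuclideanSpace ℝ (Fin D × Fin (N + 1))

/-- Parameter space `ℝ^p` with the Euclidean norm. -/
abbrev Par (p : ℕ) : Type := EuclideanSpace ℝ (Fin p)

/-- The `j`-th column of a matrix, as a Euclidean vector. -/
noncomputable def matCol {D N : ℕ} (Z : Mat D N) (j : Fin (N + 1)) :
    EuclideanSpace ℝ (Fin D) :=
  (WithLp.equiv 2 (Fin D → ℝ)).symm fun i => Z (i, j)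

/-- Maximum ℓ²-norm of a column: `‖Z‖_{2,col}`. -/
noncomputable def colNorm {D N : ℕ} (Z : Mat D N) : ℝ :=
  ⨆ j : Fin (N + 1), ‖matCol Z j‖

/-- A family of measures `(ρ_t)` is `Cρ`-Lipschitz in the bounded-Lipschitz norm on `[0,1]`. -/
def BLLipschitz {α : Type*} [PseudoMetricSpace α] [MeasurableSpace α]
    (ρ : ℝ → Measure α) (Cρ : ℝ) : Prop :=
  ∀ φ : α → ℝ, (∀ x, |φ x| ≤ 1) → LipschitzWith 1 φ →
    ∀ s ∈ Icc (0 : ℝ) 1, ∀ t ∈ Icc (0 : ℝ) 1,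
      |(∫ x, φ x ∂(ρ t)) - ∫ x, φ x ∂(ρ s)| ≤ Cρ * |t - s|

open Metric Real
open scoped NNReal

section RadialRetraction

variable {E : Type*} [NormedAddCommGroup E] [NormedSpace ℝ E] {R : ℝ}

def radialRetraction (R : ℝ) (x : E) : E := (R / max R ‖x‖) • x

lemma radialRetraction_of_norm_le (hR : 0 < R) {x : E} (hx : ‖x‖ ≤ R) :
    radialRetraction R x = x := by
  rw [radialRetraction, max_eq_left hx, div_self hR.ne', one_smul]

lemma norm_radialRetraction_le_norm (hR : 0 < R) (x : E) : ‖radialRetraction R x‖ ≤ ‖x‖ := by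
  rw [radialRetraction, norm_smul, Real.norm_of_nonneg (by positivity)]
  exact mul_le_of_le_one_left (norm_nonneg x)
    ((div_le_one (lt_max_of_lt_left hR)).2 (le_max_left _ _))

lemma norm_radialRetraction_le (hR : 0 < R) (x : E) : ‖radialRetraction R x‖ ≤ R := by
  rw [radialRetraction, norm_smul, Real.norm_of_nonneg (by positivity), div_mul_eq_mul_div,
    div_le_iff₀ (lt_max_of_lt_left hR)]
  exact mul_le_mul_of_nonneg_left (le_max_right _ _) hR.le

lemma lipschitzWith_radialRetraction (hR : 0 < R) :
    LipschitzWith 2 (radialRetraction (E := E) R) := by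
  refine LipschitzWith.of_dist_le_mul fun x y => ?_
  rw [dist_eq_norm, dist_eq_norm]
  set mx := max R ‖x‖
  set my := max R ‖y‖
  have hmx : 0 < mx := lt_max_of_lt_left hR
  have hmy : 0 < my := lt_max_of_lt_left hR
  have hmxy : |my - mx| ≤ ‖x - y‖ := by
    show |max R ‖y‖ - max R ‖x‖| ≤ ‖x - y‖
    rw [abs_sub_comm, max_comm R, max_comm R]
    exact (abs_max_sub_max_le_abs _ _ _).trans (abs_norm_sub_norm_le x y)
  have hfirst : ‖(R / mx) • (x - y)‖ ≤ ‖x - y‖ := by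
    rw [norm_smul, Real.norm_of_nonneg (by positivity)]
    exact mul_le_of_le_one_left (norm_nonneg _) ((div_le_one hmx).2 (le_max_left _ _))
  have hsecond : ‖(R / mx - R / my) • y‖ ≤ ‖x - y‖ := by
    have hdiff : R / mx - R / my = R / mx * ((my - mx) / my) := by field_simp
    have hy : ‖y‖ / my ≤ 1 := (div_le_one hmy).2 (le_max_right _ _)
    calc ‖(R / mx - R / my) • y‖ = R / mx * (|my - mx| * (‖y‖ / my)) := by
          rw [norm_smul, hdiff, Real.norm_eq_abs, abs_mul, abs_of_pos (div_pos hR hmx), abs_div,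
            abs_of_pos hmy]
          ring
      _ ≤ 1 * (‖x - y‖ * 1) := by
          gcongr
          exact (div_le_one hmx).2 (le_max_left _ _)
      _ = ‖x - y‖ := by ring
  calc ‖radialRetraction R x - radialRetraction R y‖
      = ‖(R / mx) • (x - y) + (R / mx - R / my) • y‖ := by
        rw [radialRetraction, radialRetraction]; congr 1; module
    _ ≤ ‖x - y‖ + ‖x - y‖ := (norm_add_le _ _).trans (add_le_add hfirst hsecond)
    _ = (2 : ℝ≥0) * ‖x - y‖ := by push_cast; ring

end RadialRetraction

section ODE

variable {E : Type*} [NormedAddCommGroup E] [NormedSpace ℝ E] {F : ℝ → E → E}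

def SolvesODE (F : ℝ → E → E) (α : ℝ → E) : Prop :=
  ∀ t ∈ Icc (0 : ℝ) 1, HasDerivWithinAt α (F t (α t)) (Icc 0 1) t

namespace SolvesODE

variable {α β : ℝ → E}

lemma continuousOn (hα : SolvesODE F α) : ContinuousOn α (Icc 0 1) :=
  fun t ht => (hα t ht).continuousWithinAt

lemma hasDerivWithinAt_Ici (hα : SolvesODE F α) {t : ℝ} (ht : t ∈ Ico (0 : ℝ) 1) :
    HasDerivWithinAt α (F t (α t)) (Ici t) t :=
  ((hα t (Ico_subset_Icc_self ht)).mono (Icc_subset_Icc ht.1 le_rfl)).mono_of_mem_nhdsWithin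
    (Icc_mem_nhdsGE_of_mem ⟨le_rfl, ht.2⟩)

lemma norm_le_mul_exp {M : ℝ} (hM : 0 ≤ M)
    (hF : ∀ t ∈ Icc (0 : ℝ) 1, ∀ x, ‖F t x‖ ≤ M * ‖x‖) (hα : SolvesODE F α)
    {t : ℝ} (ht : t ∈ Icc (0 : ℝ) 1) : ‖α t‖ ≤ ‖α 0‖ * exp M := by
  have h := norm_le_gronwallBound_of_norm_deriv_right_le (ε := 0) hα.continuousOn
    (fun s hs => hα.hasDerivWithinAt_Ici hs) le_rfl
    (fun s hs => (add_zero (M * _)).symm ▸ hF s (Ico_subset_Icc_self hs) (α s)) t ht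
  rw [gronwallBound_ε0, sub_zero] at h
  exact h.trans (by gcongr; nlinarith [ht.2])

lemma dist_le_mul_exp {R : ℝ} {L : ℝ≥0}
    (hF : ∀ t ∈ Icc (0 : ℝ) 1, LipschitzOnWith L (F t) (closedBall 0 R))
    (hα : SolvesODE F α) (hβ : SolvesODE F β)
    (hαR : ∀ t ∈ Icc (0 : ℝ) 1, ‖α t‖ ≤ R) (hβR : ∀ t ∈ Icc (0 : ℝ) 1, ‖β t‖ ≤ R)
    {t : ℝ} (ht : t ∈ Icc (0 : ℝ) 1) : dist (α t) (β t) ≤ dist (α 0) (β 0) * exp L := by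
  have hmem : ∀ γ : ℝ → E, (∀ t ∈ Icc (0 : ℝ) 1, ‖γ t‖ ≤ R) →
      ∀ t ∈ Ico (0 : ℝ) 1, γ t ∈ closedBall 0 R := fun γ hγ t ht =>
    mem_closedBall_zero_iff.2 (hγ t (Ico_subset_Icc_self ht))
  have h := dist_le_of_trajectories_ODE_of_mem (fun t ht => hF t (Ico_subset_Icc_self ht))
    hα.continuousOn (fun t ht => hα.hasDerivWithinAt_Ici ht) (hmem α hαR)
    hβ.continuousOn (fun t ht => hβ.hasDerivWithinAt_Ici ht) (hmem β hβR) le_rfl t ht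
  exact h.trans (by gcongr; nlinarith [ht.2, L.coe_nonneg])

lemma eqOn {M : ℝ} (hM : 0 ≤ M) (hgrowth : ∀ t ∈ Icc (0 : ℝ) 1, ∀ x, ‖F t x‖ ≤ M * ‖x‖)
    (hlip : ∀ R, ∃ L : ℝ≥0, ∀ t ∈ Icc (0 : ℝ) 1, LipschitzOnWith L (F t) (closedBall 0 R))
    (hα : SolvesODE F α) (hβ : SolvesODE F β) (h0 : α 0 = β 0) : EqOn α β (Icc 0 1) := by
  obtain ⟨L, hL⟩ := hlip (‖α 0‖ * exp M)
  intro t ht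
  have h := dist_le_mul_exp hL hα hβ (fun s hs => hα.norm_le_mul_exp hM hgrowth hs)
    (fun s hs => h0 ▸ hβ.norm_le_mul_exp hM hgrowth hs) ht
  rwa [h0, dist_self, zero_mul, dist_le_zero] at h

lemma norm_sub_le_mul_abs_sub {C : ℝ} (hα : SolvesODE F α)
    (hC : ∀ t ∈ Icc (0 : ℝ) 1, ‖F t (α t)‖ ≤ C) {s t : ℝ} (hs : s ∈ Icc (0 : ℝ) 1)
    (ht : t ∈ Icc (0 : ℝ) 1) : ‖α t - α s‖ ≤ C * |t - s| := by
  simpa [Real.norm_eq_abs] using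
    (convex_Icc (0 : ℝ) 1).norm_image_sub_le_of_norm_hasDerivWithin_le hα hC hs ht

lemma continuousOn_comp
    (hlip : ∀ R, ∃ L : ℝ≥0, ∀ t ∈ Icc (0 : ℝ) 1, LipschitzOnWith L (F t) (closedBall 0 R))
    (hcont : ∀ x, ContinuousOn (F · x) (Icc 0 1)) (hα : SolvesODE F α) :
    ContinuousOn (fun t => F t (α t)) (Icc 0 1) := by
  obtain ⟨R, hR⟩ := isCompact_Icc.exists_bound_of_continuousOn hα.continuousOn
  obtain ⟨L, hL⟩ := hlip R
  have hF : ContinuousOn (fun p : ℝ × E => F p.1 p.2) (Icc 0 1 ×ˢ closedBall 0 R) :=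
    continuousOn_prod_of_continuousOn_lipschitzOnWith' _ L hL fun x _ => hcont x
  exact hF.comp (continuousOn_id.prodMk hα.continuousOn)
    fun t ht => ⟨ht, mem_closedBall_zero_iff.2 (hR t ht)⟩

end SolvesODE

lemma exists_solvesODE_of_lipschitzWith [CompleteSpace E] {K B : ℝ≥0}
    (hlip : ∀ t ∈ Icc (0 : ℝ) 1, LipschitzWith K (F t))
    (hcont : ∀ x, ContinuousOn (F · x) (Icc 0 1))
    (hbdd : ∀ t ∈ Icc (0 : ℝ) 1, ∀ x, ‖F t x‖ ≤ B) (x₀ : E) :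
    ∃ α, α 0 = x₀ ∧ SolvesODE F α :=
  IsPicardLindelof.exists_eq_forall_mem_Icc_hasDerivWithinAt₀
    (t₀ := ⟨0, left_mem_Icc.2 zero_le_one⟩) (x₀ := x₀) (a := B) (L := B) (K := K)
    { lipschitzOnWith := fun t ht => (hlip t ht).lipschitzOnWith
      continuousOn := fun x _ => hcont x
      norm_le := fun t ht x _ => hbdd t ht x
      mul_max_le := by simp }

lemma exists_solvesODE [CompleteSpace E] {M : ℝ} (hM : 0 ≤ M)
    (hgrowth : ∀ t ∈ Icc (0 : ℝ) 1, ∀ x, ‖F t x‖ ≤ M * ‖x‖)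
    (hlip : ∀ R, ∃ L : ℝ≥0, ∀ t ∈ Icc (0 : ℝ) 1, LipschitzOnWith L (F t) (closedBall 0 R))
    (hcont : ∀ x, ContinuousOn (F · x) (Icc 0 1)) (x₀ : E) :
    ∃ α, α 0 = x₀ ∧ SolvesODE F α := by
  set R := ‖x₀‖ * exp M + 1
  have hR : 0 < R := by positivity
  obtain ⟨L, hL⟩ := hlip R
  set G : ℝ → E → E := fun t x => F t (radialRetraction R x)
  have hGlip : ∀ t ∈ Icc (0 : ℝ) 1, LipschitzWith (L * 2) (G t) := fun t ht =>
    lipschitzOnWith_univ.1 <| (hL t ht).comp (lipschitzWith_radialRetraction hR).lipschitzOnWith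
      fun x _ => mem_closedBall_zero_iff.2 (norm_radialRetraction_le hR x)
  have hGgrowth : ∀ t ∈ Icc (0 : ℝ) 1, ∀ x, ‖G t x‖ ≤ M * ‖x‖ := fun t ht x =>
    (hgrowth t ht _).trans (by gcongr; exact norm_radialRetraction_le_norm hR x)
  have hGbdd : ∀ t ∈ Icc (0 : ℝ) 1, ∀ x, ‖G t x‖ ≤ (M * R).toNNReal := fun t ht x =>
    ((hgrowth t ht _).trans (by gcongr; exact norm_radialRetraction_le hR x)).trans
      (Real.le_coe_toNNReal _)
  obtain ⟨α, hα0, hα⟩ := exists_solvesODE_of_lipschitzWith hGlip (fun x => hcont _) hGbdd x₀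
  refine ⟨α, hα0, fun t ht => ?_⟩
  have hαR : ‖α t‖ ≤ R := by
    have := hα.norm_le_mul_exp hM hGgrowth ht
    rw [hα0] at this
    linarith
  simpa only [G, radialRetraction_of_norm_le hR hαR] using hα t ht

lemma exists_norm_sub_le_of_solvesODE {M : ℝ} (hM : 0 ≤ M)
    (hgrowth : ∀ t ∈ Icc (0 : ℝ) 1, ∀ x, ‖F t x‖ ≤ M * ‖x‖)
    (hlip : ∀ R, ∃ L : ℝ≥0, ∀ t ∈ Icc (0 : ℝ) 1, LipschitzOnWith L (F t) (closedBall 0 R))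
    (R : ℝ) : ∃ C, 0 ≤ C ∧ ∀ α β : ℝ → E, SolvesODE F α → SolvesODE F β →
      ‖α 0‖ ≤ R → ‖β 0‖ ≤ R → ∀ t ∈ Icc (0 : ℝ) 1, ∀ s ∈ Icc (0 : ℝ) 1,
        ‖α t - β s‖ ≤ C * (‖α 0 - β 0‖ + |t - s|) := by
  obtain ⟨L, hL⟩ := hlip (R * exp M)
  refine ⟨max (exp L) (M * (R * exp M)), (exp_pos _).le.trans (le_max_left _ _),
    fun α β hα hβ hα0 hβ0 t ht s hs => ?_⟩
  have hbound : ∀ γ : ℝ → E, SolvesODE F γ → ‖γ 0‖ ≤ R →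
      ∀ t ∈ Icc (0 : ℝ) 1, ‖γ t‖ ≤ R * exp M := fun γ hγ hγ0 t ht =>
    (hγ.norm_le_mul_exp hM hgrowth ht).trans (by gcongr)
  have hinit : ‖α t - β t‖ ≤ ‖α 0 - β 0‖ * exp L := by
    simpa only [dist_eq_norm] using
      hα.dist_le_mul_exp hL hβ (hbound α hα hα0) (hbound β hβ hβ0) ht
  have htime : ‖β t - β s‖ ≤ M * (R * exp M) * |t - s| :=
    hβ.norm_sub_le_mul_abs_sub (fun u hu => (hgrowth u hu _).trans
      (by gcongr; exact hbound β hβ hβ0 u hu)) hs ht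
  calc ‖α t - β s‖ ≤ ‖α t - β t‖ + ‖β t - β s‖ := norm_sub_le_norm_sub_add_norm_sub _ _ _
    _ ≤ ‖α 0 - β 0‖ * exp L + M * (R * exp M) * |t - s| := add_le_add hinit htime
    _ ≤ max (exp L) (M * (R * exp M)) * (‖α 0 - β 0‖ + |t - s|) := by
      rw [mul_add, mul_comm]
      gcongr
      exacts [le_max_left _ _, le_max_right _ _]

end ODE

section Integral

variable {X : Type*} [MeasurableSpace X] {μ : Measure X} [IsFiniteMeasure μ] {Cm : ℝ}
  {E : Type*} [NormedAddCommGroup E]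

lemma norm_integral_le_mul_of_measure_univ_le [NormedSpace ℝ E] (hCm : 0 ≤ Cm)
    (hμ : μ univ ≤ ENNReal.ofReal Cm) {f : X → E} {C : ℝ} (hC : 0 ≤ C)
    (hf : ∀ᵐ x ∂μ, ‖f x‖ ≤ C) : ‖∫ x, f x ∂μ‖ ≤ Cm * C :=
  (norm_integral_le_of_norm_le_const hf).trans <| by
    rw [mul_comm]
    exact mul_le_mul_of_nonneg_right (ENNReal.toReal_le_of_le_ofReal hCm hμ) hC

lemma lipschitzOnWith_integral_of_measure_univ_le [NormedSpace ℝ E] {Y : Type*}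
    [PseudoMetricSpace Y] {f : Y → X → E} {s : Set Y} {L : ℝ≥0} (hCm : 0 ≤ Cm)
    (hμ : μ univ ≤ ENNReal.ofReal Cm)
    (hint : ∀ y ∈ s, Integrable (f y) μ) (hf : ∀ᵐ x ∂μ, LipschitzOnWith L (f · x) s) :
    LipschitzOnWith (Cm.toNNReal * L) (fun y => ∫ x, f y x ∂μ) s := by
  refine LipschitzOnWith.of_dist_le_mul fun y hy y' hy' => ?_
  rw [dist_eq_norm, ← integral_sub (hint y hy) (hint y' hy'), NNReal.coe_mul,
    Real.coe_toNNReal _ hCm, mul_assoc]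
  refine norm_integral_le_mul_of_measure_univ_le hCm hμ (by positivity) (hf.mono fun x hx => ?_)
  rw [← dist_eq_norm]
  exact hx.dist_le_mul y hy y' hy'

lemma Continuous.integrable_of_ae_norm_le [NormedAddCommGroup X] [ProperSpace X]
    [OpensMeasurableSpace X] {f : X → E} (hf : Continuous f) {r : ℝ}
    (hμ : ∀ᵐ x ∂μ, ‖x‖ ≤ r) : Integrable f μ := by
  obtain ⟨C, hC⟩ := (isCompact_closedBall (0 : X) r).exists_bound_of_continuousOn hf.continuousOn
  exact Integrable.of_bound hf.aestronglyMeasurable C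
    (hμ.mono fun x hx => hC x (mem_closedBall_zero_iff.2 hx))

end Integral

lemma UniformContinuous.exists_lipschitzWith_abs_sub_le {X : Type*} [PseudoMetricSpace X]
    {f : X → ℝ} (hf : UniformContinuous f) {C : ℝ} (hfC : ∀ x, |f x| ≤ C) {ε : ℝ}
    (hε : 0 < ε) :
    ∃ (L : ℝ≥0) (φ : X → ℝ), LipschitzWith L φ ∧ (∀ x, |φ x| ≤ C) ∧ ∀ x, |f x - φ x| ≤ ε := by
  obtain ⟨δ, hδ, hfδ⟩ := Metric.uniformContinuous_iff.1 hf ε hε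
  set L : ℝ≥0 := (2 * C / δ).toNNReal
  have hLδ : 2 * C ≤ L * δ := by
    rw [← div_le_iff₀ hδ]
    exact Real.le_coe_toNNReal _
  set φ : X → ℝ := fun x => ⨅ y, f y + L * dist x y
  have hbdd : ∀ x, BddBelow (range fun y => f y + L * dist x y) := fun x =>
    ⟨-C, by rintro _ ⟨y, rfl⟩; nlinarith [(abs_le.1 (hfC y)).1, dist_nonneg (x := x) (y := y),
      L.coe_nonneg]⟩
  have hle : ∀ x y, φ x ≤ f y + L * dist x y := fun x y => ciInf_le (hbdd x) y
  have hφf : ∀ x, φ x ≤ f x := fun x => by simpa using hle x x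
  have hφC : ∀ x, -C ≤ φ x := fun x =>
    have : Nonempty X := ⟨x⟩
    le_ciInf fun y => by nlinarith [(abs_le.1 (hfC y)).1, dist_nonneg (x := x) (y := y),
      L.coe_nonneg]
  have hφL : LipschitzWith L φ := LipschitzWith.of_le_add_mul L fun x y => by
    have : Nonempty X := ⟨x⟩
    rw [← sub_le_iff_le_add]
    refine le_ciInf fun z => ?_
    nlinarith [hle x z, dist_triangle x y z, L.coe_nonneg]
  have hfφ : ∀ x, f x - ε ≤ φ x := fun x => by
    have : Nonempty X := ⟨x⟩
    refine le_ciInf fun y => ?_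
    rcases lt_or_ge (dist x y) δ with hxy | hxy
    · have := hfδ hxy
      rw [Real.dist_eq] at this
      nlinarith [(abs_lt.1 this).2, dist_nonneg (x := x) (y := y), L.coe_nonneg]
    · nlinarith [(abs_le.1 (hfC x)).2, (abs_le.1 (hfC y)).1,
        mul_le_mul_of_nonneg_left hxy L.coe_nonneg]
  exact ⟨L, φ, hφL, fun x => abs_le.2 ⟨hφC x, (hφf x).trans (abs_le.1 (hfC x)).2⟩,
    fun x => abs_le.2 ⟨by linarith [hφf x], by linarith [hfφ x]⟩⟩

namespace BLLipschitz

section PseudoMetric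

variable {X : Type*} [PseudoMetricSpace X] [MeasurableSpace X] {ρ : ℝ → Measure X} {Cρ : ℝ}

lemma lipschitzOnWith_integral (hBL : BLLipschitz ρ Cρ) {φ : X → ℝ} {M : ℝ≥0}
    (hφ : ∀ x, |φ x| ≤ M) (hφL : LipschitzWith M φ) :
    LipschitzOnWith (M * Cρ.toNNReal) (fun t => ∫ x, φ x ∂ρ t) (Icc 0 1) := by
  rcases eq_or_ne M 0 with rfl | hM
  · have hφ0 : φ = 0 := funext fun x => abs_nonpos_iff.1 (by simpa using hφ x)
    simp [hφ0]
  have hM : (0 : ℝ) < M := NNReal.coe_pos.2 (pos_iff_ne_zero.2 hM)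
  refine LipschitzOnWith.of_dist_le_mul fun t ht s hs => ?_
  have h := hBL (fun x => (M : ℝ)⁻¹ * φ x)
    (fun x => by rw [abs_mul, abs_inv, abs_of_pos hM]; exact inv_mul_le_one_of_le₀ (hφ x) hM.le)
    (LipschitzWith.of_dist_le_mul fun x y => by
      rw [Real.dist_eq, ← mul_sub, abs_mul, abs_inv, abs_of_pos hM, NNReal.coe_one, one_mul,
        inv_mul_le_iff₀ hM, ← Real.dist_eq]
      exact hφL.dist_le_mul x y) s hs t ht
  rw [integral_const_mul, integral_const_mul, ← mul_sub, abs_mul, abs_inv, abs_of_pos hM,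
    inv_mul_le_iff₀ hM] at h
  rw [Real.dist_eq, NNReal.coe_mul, Real.dist_eq, mul_assoc]
  exact h.trans (by gcongr; exact Real.le_coe_toNNReal _)

variable [OpensMeasurableSpace X] [∀ t, IsFiniteMeasure (ρ t)] {Cm : ℝ}

lemma continuousOn_integral_of_uniformContinuous (hBL : BLLipschitz ρ Cρ) (hCm : 0 ≤ Cm)
    (hmass : ∀ t ∈ Icc (0 : ℝ) 1, ρ t univ ≤ ENNReal.ofReal Cm) {f : X → ℝ}
    (hf : UniformContinuous f) {C : ℝ} (hfC : ∀ x, |f x| ≤ C) :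
    ContinuousOn (fun t => ∫ x, f x ∂ρ t) (Icc 0 1) := by
  refine continuousOn_of_uniform_approx_of_continuousOn fun u hu => ?_
  obtain ⟨ε, hε, hεu⟩ := Metric.mem_uniformity_dist.1 hu
  obtain ⟨L, φ, hφL, hφC, hfφ⟩ :=
    hf.exists_lipschitzWith_abs_sub_le hfC (ε := ε / (Cm + 1)) (by positivity)
  have hint : ∀ g : X → ℝ, Continuous g → (∀ x, |g x| ≤ C) → ∀ t, Integrable g (ρ t) :=
    fun g hg hgC t => Integrable.of_bound hg.aestronglyMeasurable C (ae_of_all _ hgC)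
  set M : ℝ≥0 := max L C.toNNReal
  refine ⟨fun t => ∫ x, φ x ∂ρ t, (hBL.lipschitzOnWith_integral (M := M)
    (fun x => (hφC x).trans ((Real.le_coe_toNNReal C).trans (le_max_right _ _)))
    (hφL.weaken (le_max_left _ _))).continuousOn, fun t ht => hεu ?_⟩
  rw [dist_eq_norm, ← integral_sub (hint f hf.continuous hfC t) (hint φ hφL.continuous hφC t)]
  calc ‖∫ x, f x - φ x ∂ρ t‖ ≤ Cm * (ε / (Cm + 1)) :=
        norm_integral_le_mul_of_measure_univ_le hCm (hmass t ht) (by positivity)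
          (ae_of_all _ fun x => hfφ x)
    _ < ε := by
        rw [mul_div_assoc', div_lt_iff₀ (by positivity)]
        nlinarith

end PseudoMetric

section Normed

variable {X : Type*} [NormedAddCommGroup X] [NormedSpace ℝ X] [ProperSpace X] [MeasurableSpace X]
  [OpensMeasurableSpace X] {ρ : ℝ → Measure X} [∀ t, IsFiniteMeasure (ρ t)] {Cρ Cm r : ℝ}

/-- Composing with the retraction onto the ball carrying the `ρ t` makes `f` bounded and uniformly
continuous without changing its integrals. -/
lemma continuousOn_integral_real (hBL : BLLipschitz ρ Cρ) (hCm : 0 ≤ Cm)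
    (hmass : ∀ t ∈ Icc (0 : ℝ) 1, ρ t univ ≤ ENNReal.ofReal Cm) (hr : 0 < r)
    (hsupp : ∀ t ∈ Icc (0 : ℝ) 1, ∀ᵐ x ∂ρ t, ‖x‖ ≤ r) {f : X → ℝ} (hf : Continuous f) :
    ContinuousOn (fun t => ∫ x, f x ∂ρ t) (Icc 0 1) := by
  have : CompactSpace (closedBall (0 : X) r) :=
    isCompact_iff_compactSpace.1 (isCompact_closedBall _ _)
  have hunif : UniformContinuous (f ∘ radialRetraction r) :=
    (CompactSpace.uniformContinuous_of_continuous (hf.comp continuous_subtype_val)).comp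
      ((lipschitzWith_radialRetraction hr).uniformContinuous.subtype_mk
        fun x => mem_closedBall_zero_iff.2 (norm_radialRetraction_le hr x))
  obtain ⟨C, hC⟩ := (isCompact_closedBall (0 : X) r).exists_bound_of_continuousOn hf.continuousOn
  refine (hBL.continuousOn_integral_of_uniformContinuous hCm hmass hunif (C := C)
    fun x => hC _ (mem_closedBall_zero_iff.2 (norm_radialRetraction_le hr x))).congr
    fun t ht => integral_congr_ae ((hsupp t ht).mono fun x hx => ?_)
  simp [radialRetraction_of_norm_le hr hx]

lemma continuousOn_integral {E : Type*} [NormedAddCommGroup E] [NormedSpace ℝ E]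
    [FiniteDimensional ℝ E] (hBL : BLLipschitz ρ Cρ) (hCm : 0 ≤ Cm)
    (hmass : ∀ t ∈ Icc (0 : ℝ) 1, ρ t univ ≤ ENNReal.ofReal Cm) (hr : 0 < r)
    (hsupp : ∀ t ∈ Icc (0 : ℝ) 1, ∀ᵐ x ∂ρ t, ‖x‖ ≤ r) {f : X → E} (hf : Continuous f) :
    ContinuousOn (fun t => ∫ x, f x ∂ρ t) (Icc 0 1) := by
  set e := (Module.finBasis ℝ E).equivFunL
  rw [← e.comp_continuousOn_iff, continuousOn_pi]
  intro k
  set πk : E →L[ℝ] ℝ := (ContinuousLinearMap.proj k).comp e.toContinuousLinearMap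
  refine (hBL.continuousOn_integral_real hCm hmass hr hsupp (πk.continuous.comp hf)).congr
    fun t ht => ?_
  exact (πk.integral_comp_comm (hf.integrable_of_ae_norm_le (hsupp t ht))).symm

end Normed

end BLLipschitz

section ColNorm

variable {D N : ℕ}

lemma norm_sq_eq_sum_norm_matCol_sq (Z : Mat D N) : ‖Z‖ ^ 2 = ∑ j, ‖matCol Z j‖ ^ 2 := by
  simp only [EuclideanSpace.norm_sq_eq, Fintype.sum_prod_type_right]
  rfl

lemma norm_matCol_le_colNorm (Z : Mat D N) (j : Fin (N + 1)) : ‖matCol Z j‖ ≤ colNorm Z :=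
  le_ciSup (f := fun j => ‖matCol Z j‖) (finite_range _).bddAbove j

lemma colNorm_le_norm (Z : Mat D N) : colNorm Z ≤ ‖Z‖ := by
  refine ciSup_le fun j => (pow_le_pow_iff_left₀ (norm_nonneg _) (norm_nonneg _) two_ne_zero).1 ?_
  rw [norm_sq_eq_sum_norm_matCol_sq]
  exact Finset.single_le_sum (f := fun j => ‖matCol Z j‖ ^ 2) (fun _ _ => by positivity)
    (Finset.mem_univ j)

lemma norm_le_sqrt_mul_colNorm (Z : Mat D N) : ‖Z‖ ≤ √(N + 1) * colNorm Z := by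
  have hsum : ‖Z‖ ^ 2 ≤ (N + 1) * colNorm Z ^ 2 := by
    rw [norm_sq_eq_sum_norm_matCol_sq]
    calc ∑ j, ‖matCol Z j‖ ^ 2 ≤ ∑ _j : Fin (N + 1), colNorm Z ^ 2 :=
          Finset.sum_le_sum fun j _ => by gcongr; exact norm_matCol_le_colNorm Z j
      _ = (N + 1) * colNorm Z ^ 2 := by simp
  calc ‖Z‖ = √(‖Z‖ ^ 2) := (sqrt_sq (norm_nonneg Z)).symm
    _ ≤ √((N + 1) * colNorm Z ^ 2) := sqrt_le_sqrt hsum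
    _ = √(N + 1) * colNorm Z := by
        rw [sqrt_mul (by positivity), sqrt_sq ((norm_nonneg _).trans (norm_matCol_le_colNorm Z 0))]

end ColNorm

section GrowthConditions

variable {Y : Type*} [NormedAddCommGroup Y] {r : ℝ} {β : Y}

lemma norm_le_of_colNorm_growth {D N : ℕ} {g : Mat D N → Y → Mat D N} {K : ℝ} (hK : 0 ≤ K)
    (hG1 : ∀ T β, colNorm (g T β) ≤ K * colNorm T * (1 + ‖β‖ + ‖β‖ ^ 2)) (hβ : ‖β‖ ≤ r)
    (T : Mat D N) : ‖g T β‖ ≤ √(N + 1) * K * (1 + r + r ^ 2) * ‖T‖ :=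
  calc ‖g T β‖ ≤ √(N + 1) * (K * colNorm T * (1 + ‖β‖ + ‖β‖ ^ 2)) :=
        (norm_le_sqrt_mul_colNorm _).trans (by gcongr; exact hG1 T β)
    _ ≤ √(N + 1) * (K * ‖T‖ * (1 + r + r ^ 2)) := by gcongr; exact colNorm_le_norm T
    _ = √(N + 1) * K * (1 + r + r ^ 2) * ‖T‖ := by ring

lemma lipschitzOnWith_of_fderiv_growth {E F : Type*} [NormedAddCommGroup E] [NormedSpace ℝ E]
    [NormedAddCommGroup F] [NormedSpace ℝ F] {g : E → Y → F}
    (hg : ∀ β, Differentiable ℝ (g · β)) {φT : ℝ → ℝ} (hφT : Monotone φT)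
    (hG3 : ∀ T β, ‖fderiv ℝ (fun T' => g T' β) T‖ ≤ φT ‖T‖ * (1 + ‖β‖ + ‖β‖ ^ 2))
    (hβ : ‖β‖ ≤ r) (R : ℝ) :
    LipschitzOnWith (φT R * (1 + r + r ^ 2)).toNNReal (g · β) (closedBall 0 R) := by
  refine (convex_closedBall 0 R).lipschitzOnWith_of_nnnorm_fderiv_le
    (fun T _ => (hg β).differentiableAt) fun T hT => ?_
  rw [← norm_toNNReal]
  refine Real.toNNReal_le_toNNReal ((hG3 T β).trans ?_)
  have hT : φT ‖T‖ ≤ φT R := hφT (mem_closedBall_zero_iff.1 hT)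
  -- the bound `hG3` itself forces `φT ≥ 0` along the ball
  have hφT0 : 0 ≤ φT ‖T‖ :=
    nonneg_of_mul_nonneg_left ((norm_nonneg _).trans (hG3 T β)) (by positivity)
  exact mul_le_mul hT (by gcongr) (by positivity) (hφT0.trans hT)

end GrowthConditions

theorem stmt0_general (D N p : ℕ) (g : Mat D N → Par p → Mat D N)
    (K r Cm Cρ : ℝ) (φT : ℝ → ℝ)
    (hK : 0 < K) (hr : 0 < r) (hCm : 0 < Cm)
    (hgdiff : Differentiable ℝ fun z : Mat D N × Par p => g z.1 z.2)
    (hG1 : ∀ (T : Mat D N) (β : Par p),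
      colNorm (g T β) ≤ K * colNorm T * (1 + ‖β‖ + ‖β‖ ^ 2))
    (hφT : Continuous φT ∧ Monotone φT)
    (hG3 : ∀ (T : Mat D N) (β : Par p),
      ‖fderiv ℝ (fun T' => g T' β) T‖ ≤ φT ‖T‖ * (1 + ‖β‖ + ‖β‖ ^ 2))
    (ρ : ℝ → Measure (Par p)) [∀ t, IsFiniteMeasure (ρ t)]
    (hsupp : ∀ t ∈ Icc (0 : ℝ) 1, ρ t {β : Par p | r < ‖β‖} = 0)
    (hmass : ∀ t ∈ Icc (0 : ℝ) 1, ρ t univ ≤ ENNReal.ofReal Cm)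
    (hBL : BLLipschitz ρ Cρ) :
    ∃ T : Mat D N → ℝ → Mat D N,
      -- existence: for every `H`, `T H` is a continuously differentiable solution on `[0,1]`
      (∀ H : Mat D N,
        T H 0 = H ∧
        (∀ t ∈ Icc (0 : ℝ) 1,
          HasDerivWithinAt (T H) (∫ β, g (T H t) β ∂(ρ t)) (Icc (0 : ℝ) 1) t) ∧
        ContinuousOn (fun t => ∫ β, g (T H t) β ∂(ρ t)) (Icc (0 : ℝ) 1)) ∧
      -- uniqueness on `[0,1]`
      (∀ (H : Mat D N) (T' : ℝ → Mat D N), T' 0 = H →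
        (∀ t ∈ Icc (0 : ℝ) 1,
          HasDerivWithinAt T' (∫ β, g (T' t) β ∂(ρ t)) (Icc (0 : ℝ) 1) t) →
        EqOn (T H) T' (Icc (0 : ℝ) 1)) ∧
      -- joint Lipschitz continuity of `(H, t) ↦ T(H, t)` on `{‖H‖_{2,col} ≤ B} × [0,1]`
      (∀ B : ℝ, 0 < B → ∃ Lc : ℝ, 0 ≤ Lc ∧
        ∀ H H' : Mat D N, colNorm H ≤ B → colNorm H' ≤ B →
          ∀ t ∈ Icc (0 : ℝ) 1, ∀ t' ∈ Icc (0 : ℝ) 1,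
            ‖T H t - T H' t'‖ ≤ Lc * (‖H - H'‖ + |t - t'|)) := by
  have hae : ∀ t ∈ Icc (0 : ℝ) 1, ∀ᵐ β ∂ρ t, ‖β‖ ≤ r := fun t ht =>
    ae_iff.2 (by simpa only [not_le] using hsupp t ht)
  have hgx : ∀ β, Differentiable ℝ (g · β) := fun β =>
    hgdiff.comp (differentiable_id.prodMk (differentiable_const β))
  have hgβ : ∀ T, Continuous (g T) := fun T =>
    hgdiff.continuous.comp (continuous_const.prodMk continuous_id)
  have hint : ∀ t ∈ Icc (0 : ℝ) 1, ∀ T, Integrable (g T) (ρ t) := fun t ht T =>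
    (hgβ T).integrable_of_ae_norm_le (hae t ht)
  set F : ℝ → Mat D N → Mat D N := fun t T => ∫ β, g T β ∂ρ t
  set M := Cm * (√(N + 1) * K * (1 + r + r ^ 2))
  have hM : 0 ≤ M := by positivity
  have hgrowth : ∀ t ∈ Icc (0 : ℝ) 1, ∀ T, ‖F t T‖ ≤ M * ‖T‖ := fun t ht T => by
    rw [mul_assoc]
    exact norm_integral_le_mul_of_measure_univ_le hCm.le (hmass t ht) (by positivity)
      ((hae t ht).mono fun β hβ => norm_le_of_colNorm_growth hK.le hG1 hβ T)
  have hlip : ∀ R, ∃ L : ℝ≥0, ∀ t ∈ Icc (0 : ℝ) 1, LipschitzOnWith L (F t) (closedBall 0 R) :=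
    fun R => ⟨_, fun t ht => lipschitzOnWith_integral_of_measure_univ_le hCm.le (hmass t ht)
      (fun T _ => hint t ht T) ((hae t ht).mono fun β hβ =>
        lipschitzOnWith_of_fderiv_growth hgx hφT.2 hG3 hβ R)⟩
  have hcont : ∀ T, ContinuousOn (F · T) (Icc 0 1) := fun T =>
    hBL.continuousOn_integral hCm.le hmass hr hae (hgβ T)
  choose T hT0 hT using exists_solvesODE hM hgrowth hlip hcont
  refine ⟨T, fun H => ⟨hT0 H, hT H, (hT H).continuousOn_comp hlip hcont⟩,
    fun H T' hT'0 hT' => (hT H).eqOn hM hgrowth hlip hT' ((hT0 H).trans hT'0.symm),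
    fun B _ => ?_⟩
  obtain ⟨C, hC, hCT⟩ := exists_norm_sub_le_of_solvesODE hM hgrowth hlip (√(N + 1) * B)
  have hnorm : ∀ H : Mat D N, colNorm H ≤ B → ‖H‖ ≤ √(N + 1) * B := fun H hH =>
    (norm_le_sqrt_mul_colNorm H).trans (by gcongr)
  refine ⟨C, hC, fun H H' hH hH' t ht t' ht' => ?_⟩
  simpa only [hT0] using hCT _ _ (hT H) (hT H') (by simpa only [hT0] using hnorm H hH)
    (by simpa only [hT0] using hnorm H' hH') t ht t' ht'

/-- existence, uniqueness and Lipschitz dependence for the continuous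
Transformer ODE `dT/dt = ∫ g(T(t),β) dρ_t(β)`, `T(0) = H`, on `[0,1]`. -/
theorem stmt0 (D N p : ℕ) (g : Mat D N → Par p → Mat D N)
    (K r Cm Cρ : ℝ) (φT : ℝ → ℝ)
    (hK : 0 < K) (hr : 0 < r) (hCm : 0 < Cm) (hCρ : 0 ≤ Cρ)
    (hgdiff : Differentiable ℝ fun z : Mat D N × Par p => g z.1 z.2)
    (hG1 : ∀ (T : Mat D N) (β : Par p),
      colNorm (g T β) ≤ K * colNorm T * (1 + ‖β‖ + ‖β‖ ^ 2))
    (hφT : Continuous φT ∧ Monotone φT)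
    (hG3 : ∀ (T : Mat D N) (β : Par p),
      ‖fderiv ℝ (fun T' => g T' β) T‖ ≤ φT ‖T‖ * (1 + ‖β‖ + ‖β‖ ^ 2))
    (ρ : ℝ → Measure (Par p)) [∀ t, IsFiniteMeasure (ρ t)]
    (hsupp : ∀ t ∈ Icc (0 : ℝ) 1, ρ t {β : Par p | r < ‖β‖} = 0)
    (hmass : ∀ t ∈ Icc (0 : ℝ) 1, ρ t univ ≤ ENNReal.ofReal Cm)
    (hBL : BLLipschitz ρ Cρ) :
    ∃ T : Mat D N → ℝ → Mat D N,
      -- existence: for every `H`, `T H` is a continuously differentiable solution on `[0,1]`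
      (∀ H : Mat D N,
        T H 0 = H ∧
        (∀ t ∈ Icc (0 : ℝ) 1,
          HasDerivWithinAt (T H) (∫ β, g (T H t) β ∂(ρ t)) (Icc (0 : ℝ) 1) t) ∧
        ContinuousOn (fun t => ∫ β, g (T H t) β ∂(ρ t)) (Icc (0 : ℝ) 1)) ∧
      -- uniqueness on `[0,1]`
      (∀ (H : Mat D N) (T' : ℝ → Mat D N), T' 0 = H →
        (∀ t ∈ Icc (0 : ℝ) 1,
          HasDerivWithinAt T' (∫ β, g (T' t) β ∂(ρ t)) (Icc (0 : ℝ) 1) t) →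
        EqOn (T H) T' (Icc (0 : ℝ) 1)) ∧
      -- joint Lipschitz continuity of `(H, t) ↦ T(H, t)` on `{‖H‖_{2,col} ≤ B} × [0,1]`
      (∀ B : ℝ, 0 < B → ∃ Lc : ℝ, 0 ≤ Lc ∧
        ∀ H H' : Mat D N, colNorm H ≤ B → colNorm H' ≤ B →
          ∀ t ∈ Icc (0 : ℝ) 1, ∀ t' ∈ Icc (0 : ℝ) 1,
            ‖T H t - T H' t'‖ ≤ Lc * (‖H - H'‖ + |t - t'|)) :=
  stmt0_general D N p g K r Cm Cρ φT hK hr hCm hgdiff hG1 hφT hG3 ρ hsupp hmass hBL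
end
end

section
/- For all positive integers D, N, all V, W ∈ ℝ^{D×D}, and all Z ∈ ℝ^{D×(N+1)}: ‖V·Z·softmax(ZᵀWZ)‖_{2,col} ≤ ‖V‖₂·‖Z‖_{2,col}, where ‖V‖₂ is the spectral norm and softmax is applied column-wise. In particular, with ‖θ‖ = √(‖V‖_F² + ‖W‖_F²), the softmax self-attention encoder f(Z,θ) = VZ·softmax(ZᵀWZ) satisfies ‖f(Z,θ)‖_{2,col} ≤ ‖θ‖·‖Z‖_{2,col}. -/
/-!
Every column of `softmaxCol A` is a probability vector, so every column of `Z * softmaxCol A` is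
a convex combination of columns of `Z` and lies in the closed ball of radius `colNormM Z`.
Multiplying by `V` scales Euclidean norms by at most `specNorm V`, and the operator norm is
bounded by the Frobenius norm (Cauchy–Schwarz row by row), hence by `√(‖V‖_F² + ‖W‖_F²)`.
-/

open Matrix

noncomputable section

/-- Column-wise softmax of a matrix. -/
noncomputable def softmaxCol {n m : ℕ} (A : Matrix (Fin n) (Fin m) ℝ) :
    Matrix (Fin n) (Fin m) ℝ :=
  Matrix.of fun i j => Real.exp (A i j) / ∑ k, Real.exp (A k j)

/-- Maximum ℓ²-norm of a column. -/
noncomputable def colNormM {n m : ℕ} (Z : Matrix (Fin n) (Fin m) ℝ) : ℝ :=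
  ⨆ j : Fin m, Real.sqrt (∑ i, Z i j ^ 2)

/-- Frobenius norm. -/
noncomputable def frobM {n m : ℕ} (Z : Matrix (Fin n) (Fin m) ℝ) : ℝ :=
  Real.sqrt (∑ i, ∑ j, Z i j ^ 2)

/-- Spectral (ℓ² operator) norm of a matrix. -/
noncomputable def specNorm {n m : ℕ} (V : Matrix (Fin n) (Fin m) ℝ) : ℝ :=
  ‖LinearMap.toContinuousLinearMap (Matrix.toEuclideanLin V)‖

open Finset

lemma norm_toLp_eq_sqrt_sum_sq {n : ℕ} (x : Fin n → ℝ) :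
    ‖(WithLp.toLp 2 x : EuclideanSpace ℝ (Fin n))‖ = √(∑ i, x i ^ 2) := by
  simp [EuclideanSpace.norm_eq, sq_abs]

lemma colNormM_eq_iSup_norm {n m : ℕ} (Z : Matrix (Fin n) (Fin m) ℝ) :
    colNormM Z = ⨆ j, ‖(WithLp.toLp 2 (Zᵀ j) : EuclideanSpace ℝ (Fin n))‖ := by
  simp only [colNormM, norm_toLp_eq_sqrt_sum_sq, transpose_apply]

lemma colNormM_nonneg {n m : ℕ} (Z : Matrix (Fin n) (Fin m) ℝ) : 0 ≤ colNormM Z :=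
  Real.iSup_nonneg fun _ => Real.sqrt_nonneg _

lemma norm_col_le_colNormM {n m : ℕ} (Z : Matrix (Fin n) (Fin m) ℝ) (j : Fin m) :
    ‖(WithLp.toLp 2 (Zᵀ j) : EuclideanSpace ℝ (Fin n))‖ ≤ colNormM Z := by
  rw [colNormM_eq_iSup_norm]
  exact le_ciSup (f := fun j => ‖(WithLp.toLp 2 (Zᵀ j) : EuclideanSpace ℝ (Fin n))‖)
    (Set.finite_range _).bddAbove j

lemma colNormM_le {n m : ℕ} {Z : Matrix (Fin n) (Fin m) ℝ} {c : ℝ} (hc : 0 ≤ c)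
    (h : ∀ j, ‖(WithLp.toLp 2 (Zᵀ j) : EuclideanSpace ℝ (Fin n))‖ ≤ c) : colNormM Z ≤ c := by
  rw [colNormM_eq_iSup_norm]
  exact Real.iSup_le h hc

lemma norm_toLp_mulVec_le_specNorm {n m : ℕ} (V : Matrix (Fin n) (Fin m) ℝ) (x : Fin m → ℝ) :
    ‖(WithLp.toLp 2 (V *ᵥ x) : EuclideanSpace ℝ (Fin n))‖
      ≤ specNorm V * ‖(WithLp.toLp 2 x : EuclideanSpace ℝ (Fin m))‖ :=
  (LinearMap.toContinuousLinearMap (toEuclideanLin V)).le_opNorm (WithLp.toLp 2 x)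

lemma colNormM_mul_le_specNorm_mul {n m p : ℕ} (V : Matrix (Fin n) (Fin m) ℝ)
    (Z : Matrix (Fin m) (Fin p) ℝ) : colNormM (V * Z) ≤ specNorm V * colNormM Z := by
  refine colNormM_le (mul_nonneg (norm_nonneg _) (colNormM_nonneg Z)) fun j => ?_
  have hcol : (V * Z)ᵀ j = V *ᵥ Zᵀ j := by
    ext i; simp [mul_apply, mulVec, dotProduct]
  rw [hcol]
  exact (norm_toLp_mulVec_le_specNorm V _).trans
    (mul_le_mul_of_nonneg_left (norm_col_le_colNormM Z j) (norm_nonneg _))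

lemma colNormM_mul_le_of_stochastic {n m p : ℕ} (Z : Matrix (Fin n) (Fin m) ℝ)
    {S : Matrix (Fin m) (Fin p) ℝ} (hS_nonneg : ∀ k j, 0 ≤ S k j)
    (hS_sum : ∀ j, ∑ k, S k j = 1) : colNormM (Z * S) ≤ colNormM Z := by
  refine colNormM_le (colNormM_nonneg Z) fun j => ?_
  have hcol : (WithLp.toLp 2 ((Z * S)ᵀ j) : EuclideanSpace ℝ (Fin n))
      = ∑ k, S k j • WithLp.toLp 2 (Zᵀ k) := by
    ext i; simp [mul_apply, mul_comm]
  rw [hcol, ← mem_closedBall_zero_iff]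
  exact (convex_closedBall 0 _).sum_mem (fun k _ => hS_nonneg k j) (hS_sum j)
    fun k _ => mem_closedBall_zero_iff.2 (norm_col_le_colNormM Z k)

lemma softmaxCol_nonneg {n m : ℕ} (A : Matrix (Fin n) (Fin m) ℝ) (k : Fin n) (j : Fin m) :
    0 ≤ softmaxCol A k j :=
  div_nonneg (Real.exp_pos _).le (sum_nonneg fun _ _ => (Real.exp_pos _).le)

lemma sum_softmaxCol {n m : ℕ} [NeZero n] (A : Matrix (Fin n) (Fin m) ℝ) (j : Fin m) :
    ∑ k, softmaxCol A k j = 1 := by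
  simp only [softmaxCol, of_apply, ← sum_div]
  exact div_self (sum_pos (fun _ _ => Real.exp_pos _) univ_nonempty).ne'

lemma norm_toLp_mulVec_le_frobM {n m : ℕ} (V : Matrix (Fin n) (Fin m) ℝ) (x : Fin m → ℝ) :
    ‖(WithLp.toLp 2 (V *ᵥ x) : EuclideanSpace ℝ (Fin n))‖
      ≤ frobM V * ‖(WithLp.toLp 2 x : EuclideanSpace ℝ (Fin m))‖ := by
  rw [norm_toLp_eq_sqrt_sum_sq, norm_toLp_eq_sqrt_sum_sq, frobM, ← Real.sqrt_mul (by positivity),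
    sum_mul]
  refine Real.sqrt_le_sqrt (sum_le_sum fun i _ => ?_)
  simpa [mulVec, dotProduct] using sum_mul_sq_le_sq_mul_sq univ (V i) x

lemma specNorm_le_frobM {n m : ℕ} (V : Matrix (Fin n) (Fin m) ℝ) : specNorm V ≤ frobM V :=
  ContinuousLinearMap.opNorm_le_bound _ (Real.sqrt_nonneg _) fun x =>
    norm_toLp_mulVec_le_frobM V x.ofLp

theorem stmt16_general (D N : ℕ)
    (V W : Matrix (Fin D) (Fin D) ℝ) (Z : Matrix (Fin D) (Fin (N + 1)) ℝ) :
    colNormM (V * Z * softmaxCol (Zᵀ * W * Z)) ≤ specNorm V * colNormM Z ∧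
    colNormM (V * Z * softmaxCol (Zᵀ * W * Z)) ≤
      Real.sqrt (frobM V ^ 2 + frobM W ^ 2) * colNormM Z := by
  have hV : colNormM (V * Z * softmaxCol (Zᵀ * W * Z)) ≤ specNorm V * colNormM Z := by
    rw [Matrix.mul_assoc]
    exact (colNormM_mul_le_specNorm_mul V _).trans <| mul_le_mul_of_nonneg_left
      (colNormM_mul_le_of_stochastic Z (softmaxCol_nonneg _) (sum_softmaxCol _))
      (norm_nonneg _)
  have hθ : specNorm V ≤ √(frobM V ^ 2 + frobM W ^ 2) :=
    (specNorm_le_frobM V).trans <| Real.le_sqrt_of_sq_le (le_add_of_nonneg_right (sq_nonneg _))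
  exact ⟨hV, hV.trans (mul_le_mul_of_nonneg_right hθ (colNormM_nonneg Z))⟩

/-- column-norm bound for the softmax self-attention encoder. -/
theorem stmt16 (D N : ℕ) (hD : 0 < D) (hN : 0 < N)
    (V W : Matrix (Fin D) (Fin D) ℝ) (Z : Matrix (Fin D) (Fin (N + 1)) ℝ) :
    colNormM (V * Z * softmaxCol (Zᵀ * W * Z)) ≤ specNorm V * colNormM Z ∧
    colNormM (V * Z * softmaxCol (Zᵀ * W * Z)) ≤
      Real.sqrt (frobM V ^ 2 + frobM W ^ 2) * colNormM Z :=
  stmt16_general D N V W Z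
end
end
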